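/- For every f ∈ L²(ℝ^d) and every R > 0 there exist constants C, α, β > 0 such that the function ψ = A_R f satisfies |ψ(t)| ≤ C e^{−α|t|²} for all t ∈ ℝ^d and |ψ̂(ξ)| ≤ C e^{−β|ξ|²} for all ξ ∈ ℝ^d. -/

import Mathlib

open MeasureTheory Filter Metric Complex
open scoped ENNReal NNReal InnerProductSpace Classical

noncomputable section

/-- Euclidean space `ℝ^d`. -/
abbrev Rd (d : ℕ) : Type := EuclideanSpace ℝ (Fin d)

/-- The phase-space localization moment `∫_{ℝ^d} |x-a|^{2s} |f(x)|² dx` (as an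
extended-real-valued lower integral, so that it is always defined). -/
def locMoment (d : ℕ) (s : ℝ) (a : Rd d) (f : Rd d → ℂ) : ℝ≥0∞ :=
  ∫⁻ x : Rd d, (‖x - a‖₊ : ℝ≥0∞) ^ (2 * s) * (‖f x‖₊ : ℝ≥0∞) ^ 2

/-- `F` is the (unitarily extended) L²-Fourier transform of `f ∈ L²(ℝ^d)`,
characterized by the multiplication formula `∫ F φ = ∫ f 𝓕φ` against all
Schwartz test functions `φ` (with `𝓕` the classical Fourier integral
`𝓕φ(ξ) = ∫ φ(x) e^{-2πi x·ξ} dx`); this determines `F` uniquely a.e. -/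
def IsL2FourierPair (d : ℕ) (f F : Rd d → ℂ) : Prop :=
  MemLp f 2 (volume : Measure (Rd d)) ∧ MemLp F 2 (volume : Measure (Rd d)) ∧
  ∀ φ : SchwartzMap (Rd d) ℂ,
    ∫ x : Rd d, F x * φ x = ∫ x : Rd d, f x * FourierTransform.fourier (⇑φ) x

/-- `{f_i}` is a Riesz basis for `L²(ℝ^d)`: each `f_i ∈ L²`, finite linear spans are
dense in `L²`, and there are constants `0 < A ≤ B` with
`A·Σ|c_i|² ≤ ‖Σ c_i f_i‖₂² ≤ B·Σ|c_i|²` for all finitely supported scalars `c`. -/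
def IsRieszBasis {ι : Type*} (d : ℕ) (f : ι → Rd d → ℂ) : Prop :=
  (∀ i, MemLp (f i) 2 (volume : Measure (Rd d))) ∧
  (∀ h : Rd d → ℂ, MemLp h 2 (volume : Measure (Rd d)) → ∀ ε : ℝ, 0 < ε →
    ∃ c : ι →₀ ℂ,
      ∫⁻ x : Rd d, (‖h x - ∑ i ∈ c.support, c i * f i x‖₊ : ℝ≥0∞) ^ 2 < ENNReal.ofReal ε) ∧
  (∃ A B : ℝ, 0 < A ∧ A ≤ B ∧ ∀ c : ι →₀ ℂ,
    ENNReal.ofReal A * ∑ i ∈ c.support, (‖c i‖₊ : ℝ≥0∞) ^ 2 ≤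
        ∫⁻ x : Rd d, (‖∑ i ∈ c.support, c i * f i x‖₊ : ℝ≥0∞) ^ 2 ∧
    ∫⁻ x : Rd d, (‖∑ i ∈ c.support, c i * f i x‖₊ : ℝ≥0∞) ^ 2 ≤
        ENNReal.ofReal B * ∑ i ∈ c.support, (‖c i‖₊ : ℝ≥0∞) ^ 2)

/-- The number (with multiplicity) of indices `n` with `(a_n, b_n) ∈ Q((x,y),r)`. -/
def cubeCount (d : ℕ) (a b : ℕ → Rd d) (x y : Rd d) (r : ℝ) : ℝ≥0∞ :=
  ∑' n : ℕ, if dist (a n) x < r ∧ dist (b n) y < r then (1 : ℝ≥0∞) else 0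

/-- `Λ = {(a_n,b_n)}` is relatively separated: a uniform bound (with multiplicity) on the
number of points in any translate of the unit cube `[0,1]^{2d}`. -/
def RelSeparated (d : ℕ) (a b : ℕ → Rd d) : Prop :=
  ∃ N : ℕ, ∀ x y : Rd d,
    (∑' n : ℕ, if (∀ j, a n j - x j ∈ Set.Icc (0:ℝ) 1) ∧ (∀ j, b n j - y j ∈ Set.Icc (0:ℝ) 1)
        then (1:ℝ≥0∞) else 0) ≤ N

/-- Upper Beurling density `D⁺(Λ) = limsup_{r→∞} sup_x card(Λ ∩ Q(x,r))/|Q(x,r)|`. -/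
def upperDensity (d : ℕ) (a b : ℕ → Rd d) : ℝ≥0∞ :=
  limsup (fun r : ℝ => ⨆ x : Rd d, ⨆ y : Rd d,
    cubeCount d a b x y r / (volume (ball x r) * volume (ball y r))) atTop

/-- Lower Beurling density `D⁻(Λ) = liminf_{r→∞} inf_x card(Λ ∩ Q(x,r))/|Q(x,r)|`. -/
def lowerDensity (d : ℕ) (a b : ℕ → Rd d) : ℝ≥0∞ :=
  liminf (fun r : ℝ => ⨅ x : Rd d, ⨅ y : Rd d,
    cubeCount d a b x y r / (volume (ball x r) * volume (ball y r))) atTop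

/-- `{f_n}` is a frame for `L²(ℝ^d)` with frame bounds `0 < A ≤ B`. -/
def IsFrameWith (d : ℕ) (f : ℕ → Rd d → ℂ) (A B : ℝ) : Prop :=
  (∀ n, MemLp (f n) 2 (volume : Measure (Rd d))) ∧ 0 < A ∧ A ≤ B ∧
  ∀ h : Rd d → ℂ, MemLp h 2 (volume : Measure (Rd d)) →
    ENNReal.ofReal A * ∫⁻ x : Rd d, (‖h x‖₊ : ℝ≥0∞) ^ 2 ≤
        (∑' n : ℕ, (‖∫ x : Rd d, h x * star (f n x)‖₊ : ℝ≥0∞) ^ 2) ∧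
    (∑' n : ℕ, (‖∫ x : Rd d, h x * star (f n x)‖₊ : ℝ≥0∞) ^ 2) ≤
        ENNReal.ofReal B * ∫⁻ x : Rd d, (‖h x‖₊ : ℝ≥0∞) ^ 2

/-- The normalized Gaussian `g(x) = 2^{-d/4} e^{-π|x|²}` on `ℝ^d` (as a complex-valued
function). -/
def gaussd (d : ℕ) (x : Rd d) : ℂ :=
  (((2:ℝ) ^ (-(d:ℝ)/4) : ℝ) : ℂ) * Complex.exp (Complex.ofReal (-Real.pi * ‖x‖ ^ 2))

/-- The short-time Fourier transform with Gaussian window: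
`V_gφ(x,ξ) = ∫ φ(t) g(t-x) e^{-2πi t·ξ} dt`. -/
def STFT (d : ℕ) (φ : Rd d → ℂ) (x ξ : Rd d) : ℂ :=
  ∫ t : Rd d, φ t * gaussd d (t - x) *
    Complex.exp (Complex.ofReal (-2 * Real.pi * ⟪t, ξ⟫_ℝ) * Complex.I)

/-- The modulation space norm `‖φ‖_{M²_s} = (∬ |V_gφ(x,ξ)|² (1+|x|+|ξ|)^{2s} dx dξ)^{1/2}`. -/
def M2norm (d : ℕ) (s : ℝ) (φ : Rd d → ℂ) : ℝ≥0∞ :=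
  (∫⁻ p : Rd d × Rd d,
      (‖STFT d φ p.1 p.2‖₊ : ℝ≥0∞) ^ 2 * ENNReal.ofReal ((1 + ‖p.1‖ + ‖p.2‖) ^ (2 * s))) ^
    (1/2 : ℝ)

/-- The localization operator `A_R f(t) = ∬_{B(0,R)×B(0,R)} V_gf(x,ξ) e^{2πi ξ·t} g(t-x) dx dξ`. -/
def locOp (d : ℕ) (R : ℝ) (f : Rd d → ℂ) (t : Rd d) : ℂ :=
  ∫ p : Rd d × Rd d in (ball (0 : Rd d) R) ×ˢ (ball (0 : Rd d) R),
    STFT d f p.1 p.2 * Complex.exp (Complex.ofReal (2 * Real.pi * ⟪p.2, t⟫_ℝ) * Complex.I) *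
      gaussd d (t - p.1)

lemma norm_gaussd (d : ℕ) (x : Rd d) :
    ‖gaussd d x‖ = (2:ℝ) ^ (-(d:ℝ)/4) * Real.exp (-Real.pi * ‖x‖ ^ 2) := by
  rw [gaussd, norm_mul, Complex.norm_exp,
    Complex.ofReal_re, Complex.norm_real, Real.norm_eq_abs,
    abs_of_pos (by positivity : (0:ℝ) < (2:ℝ) ^ (-(d:ℝ)/4))]

lemma gauss_key {R : ℝ} (hR : 0 ≤ R) {a b : ℝ} (ha : 0 ≤ a) (hb : 0 ≤ b)
    (h : b ≤ a + R) :
    Real.exp (-Real.pi * a ^ 2) ≤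
      Real.exp (Real.pi * R ^ 2) * Real.exp (-(Real.pi/2) * b ^ 2) := by
  rw [← Real.exp_add, Real.exp_le_exp]
  nlinarith [Real.pi_pos, sq_nonneg (a - R),
    mul_le_mul h h hb (by linarith : (0:ℝ) ≤ a + R)]

lemma integrable_gauss_rd (d : ℕ) {c : ℝ} (hc : 0 < c) :
    Integrable (fun t : Rd d => Real.exp (-c * ‖t‖ ^ 2)) := by
  have h := GaussianFourier.integrable_cexp_neg_mul_sq_norm_add (V := Rd d)
      (b := (c:ℂ)) (by simpa using hc) 0 0
  have := h.norm
  refine this.congr (Eventually.of_forall fun v => ?_)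
  simp only [Complex.norm_exp]
  rw [show (-(c:ℂ) * (‖v‖:ℂ) ^ 2 + 0 * (⟪0, v⟫_ℝ:ℝ)) = ((-c * ‖v‖^2 : ℝ) : ℂ) by push_cast; ring,
    Complex.ofReal_re]

lemma memLp2_gauss (d : ℕ) {c : ℝ} (hc : 0 < c) :
    MemLp (fun t : Rd d => Real.exp (-c * ‖t‖ ^ 2)) 2 (volume : Measure (Rd d)) := by
  rw [memLp_two_iff_integrable_sq]
  · refine (integrable_gauss_rd d (by linarith : (0:ℝ) < 2*c)).congr
      (Eventually.of_forall fun t => ?_)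
    simp only [pow_two, ← Real.exp_add]
    congr 1
    ring
  · exact (Real.continuous_exp.comp (by continuity)).aestronglyMeasurable

lemma integrable_norm_mul_gauss {d : ℕ} {f : Rd d → ℂ}
    (hf : MemLp f 2 (volume : Measure (Rd d))) {c : ℝ} (hc : 0 < c) :
    Integrable (fun t : Rd d => ‖f t‖ * Real.exp (-c * ‖t‖ ^ 2)) := by
  have h := MemLp.smul (p := 2) (q := 2) (r := 1)
    (memLp2_gauss d hc) hf.norm
  exact memLp_one_iff_integrable.mp h

lemma gaussd_translate_le {d : ℕ} {R : ℝ} (hR : 0 ≤ R) {x t : Rd d} (hx : ‖x‖ ≤ R) :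
    ‖gaussd d (t - x)‖ ≤ ((2:ℝ) ^ (-(d:ℝ)/4) * Real.exp (Real.pi * R ^ 2)) *
      Real.exp (-(Real.pi/2) * ‖t‖ ^ 2) := by
  rw [norm_gaussd]
  have hb : ‖t‖ ≤ ‖t - x‖ + R := by
    have h := norm_sub_norm_le t (t - x)
    rw [sub_sub_cancel] at h
    linarith
  have h2 := gauss_key hR (norm_nonneg (t - x)) (norm_nonneg t) hb
  have h3 := mul_le_mul_of_nonneg_left h2
    (by positivity : (0:ℝ) ≤ (2:ℝ) ^ (-(d:ℝ)/4))
  calc (2:ℝ) ^ (-(d:ℝ)/4) * Real.exp (-Real.pi * ‖t - x‖ ^ 2)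
      ≤ (2:ℝ) ^ (-(d:ℝ)/4) * (Real.exp (Real.pi * R ^ 2) *
        Real.exp (-(Real.pi/2) * ‖t‖ ^ 2)) := h3
    _ = _ := by ring

lemma stft_bound {d : ℕ} {f : Rd d → ℂ} (hf : MemLp f 2 (volume : Measure (Rd d)))
    {R : ℝ} (hR : 0 ≤ R) {x : Rd d} (hx : ‖x‖ ≤ R) (ξ : Rd d) :
    ‖STFT d f x ξ‖ ≤ ((2:ℝ) ^ (-(d:ℝ)/4) * Real.exp (Real.pi * R ^ 2)) *
      ∫ t : Rd d, ‖f t‖ * Real.exp (-(Real.pi/2) * ‖t‖ ^ 2) := by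
  set K : ℝ := (2:ℝ) ^ (-(d:ℝ)/4) * Real.exp (Real.pi * R ^ 2) with hK
  have hKpos : 0 < K := by positivity
  have hgi := integrable_norm_mul_gauss hf (by positivity : (0:ℝ) < Real.pi/2)
  refine (norm_integral_le_integral_norm _).trans ?_
  have key : ∫ t : Rd d, ‖f t * gaussd d (t - x) *
      Complex.exp (Complex.ofReal (-2 * Real.pi * ⟪t, ξ⟫_ℝ) * Complex.I)‖ ≤
      ∫ t : Rd d, K * (‖f t‖ * Real.exp (-(Real.pi/2) * ‖t‖ ^ 2)) := by
    refine integral_mono_of_nonneg (Eventually.of_forall fun t => norm_nonneg _)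
      (hgi.const_mul K) (Eventually.of_forall fun t => ?_)
    dsimp only
    rw [norm_mul, norm_mul]
    rw [show Complex.ofReal (-2 * Real.pi * ⟪t, ξ⟫_ℝ) * Complex.I
        = ((-2 * Real.pi * ⟪t, ξ⟫_ℝ : ℝ) : ℂ) * Complex.I from rfl,
      Complex.norm_exp_ofReal_mul_I, mul_one]
    have := gaussd_translate_le (d := d) hR hx (t := t)
    calc ‖f t‖ * ‖gaussd d (t - x)‖
        ≤ ‖f t‖ * (K * Real.exp (-(Real.pi/2) * ‖t‖ ^ 2)) :=
          mul_le_mul_of_nonneg_left this (norm_nonneg _)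
      _ = K * (‖f t‖ * Real.exp (-(Real.pi/2) * ‖t‖ ^ 2)) := by ring
  refine key.trans (le_of_eq ?_)
  rw [integral_const_mul]

lemma fourier_gaussd (d : ℕ) (η : Rd d) :
    FourierTransform.fourier (gaussd d) η = gaussd d η := by
  have hpi : (0:ℝ) < (Real.pi : ℂ).re := by simpa using Real.pi_pos
  have hg : gaussd d = fun v : Rd d =>
      (((2:ℝ) ^ (-(d:ℝ)/4) : ℝ) : ℂ) • Complex.exp (-(Real.pi:ℂ) * (‖v‖:ℂ) ^ 2) := by
    funext v
    rw [gaussd, smul_eq_mul]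
    congr 1
    push_cast
    ring
  rw [hg]
  rw [show (fun v : Rd d => (((2:ℝ) ^ (-(d:ℝ)/4) : ℝ) : ℂ) •
        Complex.exp (-(Real.pi:ℂ) * (‖v‖:ℂ) ^ 2))
      = (((2:ℝ) ^ (-(d:ℝ)/4) : ℝ) : ℂ) •
        (fun v : Rd d => Complex.exp (-(Real.pi:ℂ) * (‖v‖:ℂ) ^ 2)) from rfl,
    show FourierTransform.fourier ((((2:ℝ) ^ (-(d:ℝ)/4) : ℝ) : ℂ) •
        (fun v : Rd d => Complex.exp (-(Real.pi:ℂ) * (‖v‖:ℂ) ^ 2))) η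
      = (((2:ℝ) ^ (-(d:ℝ)/4) : ℝ) : ℂ) •
        FourierTransform.fourier (fun v : Rd d => Complex.exp (-(Real.pi:ℂ) * (‖v‖:ℂ) ^ 2)) η
    from congrFun (VectorFourier.fourierIntegral_const_smul Real.fourierChar volume
      (innerₗ (Rd d)) _ _) η]
  have h2 := fourier_gaussian_innerProductSpace (V := Rd d) hpi η
  rw [show (fun v : Rd d => Complex.exp (-(Real.pi:ℂ) * (‖v‖:ℂ) ^ 2))
      = fun v : Rd d => Complex.exp (-(Real.pi:ℂ) * (‖v‖:ℝ) ^ 2) from rfl, h2]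
  have hπ : (Real.pi : ℂ) ≠ 0 := by
    simpa using Real.pi_ne_zero
  rw [div_self hπ, one_cpow, one_mul, smul_eq_mul]
  congr 1
  congr 1
  · field_simp

lemma norm_fourier_gaussd_translate (d : ℕ) (x η : Rd d) :
    ‖FourierTransform.fourier (fun u : Rd d => gaussd d (u - x)) η‖ = ‖gaussd d η‖ := by
  have h1 : (fun u : Rd d => gaussd d (u - x)) = gaussd d ∘ (fun u : Rd d => u + (-x)) := by
    funext u
    simp [sub_eq_add_neg]
  rw [h1]
  have h2 := congrFun (VectorFourier.fourierIntegral_comp_add_right Real.fourierChar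
    (volume : Measure (Rd d)) (innerₗ (Rd d)) (gaussd d) (-x)) η
  rw [show FourierTransform.fourier (gaussd d ∘ fun u : Rd d => u + (-x)) η
      = VectorFourier.fourierIntegral Real.fourierChar volume (innerₗ (Rd d))
        (gaussd d ∘ fun u : Rd d => u + (-x)) η from rfl, h2, Circle.norm_smul,
    show VectorFourier.fourierIntegral Real.fourierChar volume (innerₗ (Rd d)) (gaussd d) η
      = FourierTransform.fourier (gaussd d) η from rfl, fourier_gaussd]

lemma continuous_gaussd (d : ℕ) : Continuous (gaussd d) := by
  unfold gaussd
  fun_prop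

lemma stronglyMeasurable_stft {d : ℕ} {f' : Rd d → ℂ} (hf' : StronglyMeasurable f') :
    StronglyMeasurable (fun q : Rd d × Rd d => STFT d f' q.1 q.2) := by
  have h : StronglyMeasurable (fun z : (Rd d × Rd d) × Rd d =>
      f' z.2 * gaussd d (z.2 - z.1.1) *
        Complex.exp (Complex.ofReal (-2 * Real.pi * ⟪z.2, z.1.2⟫_ℝ) * Complex.I)) := by
    refine ((hf'.comp_measurable measurable_snd).mul
      (Continuous.stronglyMeasurable ?_)).mul (Continuous.stronglyMeasurable ?_)
    · exact (continuous_gaussd d).comp (continuous_snd.sub (continuous_fst.fst))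
    · refine Complex.continuous_exp.comp (Continuous.mul ?_ continuous_const)
      refine Complex.continuous_ofReal.comp (Continuous.mul continuous_const ?_)
      exact continuous_snd.inner (continuous_fst.snd)
  exact h.integral_prod_right'

/-- **Remark after Proposition 5.1.** For every `f ∈ L²(ℝ^d)` and `R > 0`, the function
`ψ = A_R f` and its Fourier transform both have Gaussian decay:
`|ψ(t)| ≤ C e^{-α|t|²}` and `|ψ̂(ξ)| ≤ C e^{-β|ξ|²}`. -/
theorem locOp_gaussian_decay
    (d : ℕ) (f : Rd d → ℂ) (hf : MemLp f 2 (volume : Measure (Rd d)))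
    (R : ℝ) (hR : 0 < R) :
    ∃ C α β : ℝ, 0 < C ∧ 0 < α ∧ 0 < β ∧
      (∀ t : Rd d, ‖locOp d R f t‖ ≤ C * Real.exp (-α * ‖t‖ ^ 2)) ∧
      (∀ ξ : Rd d, ‖FourierTransform.fourier (locOp d R f) ξ‖ ≤ C * Real.exp (-β * ‖ξ‖ ^ 2)) := by
  have hpihalf : (0:ℝ) < Real.pi / 2 := by positivity
  set c0 : ℝ := (2:ℝ) ^ (-(d:ℝ)/4) with hc0def
  set K : ℝ := c0 * Real.exp (Real.pi * R ^ 2) with hKdef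
  have hK0 : 0 < K := by rw [hKdef, hc0def]; positivity
  set M : ℝ := ∫ t : Rd d, ‖f t‖ * Real.exp (-(Real.pi/2) * ‖t‖ ^ 2) with hMdef
  have hM0 : 0 ≤ M := integral_nonneg fun t => by positivity
  set G : Rd d → ℝ := fun t => Real.exp (-(Real.pi/2) * ‖t‖ ^ 2) with hGdef
  have hG0 : ∀ t, 0 < G t := fun t => Real.exp_pos _
  set s : Set (Rd d × Rd d) := (ball (0 : Rd d) R) ×ˢ (ball (0 : Rd d) R) with hsdef
  have hsm : MeasurableSet s := measurableSet_ball.prod measurableSet_ball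
  have hsfin : volume s < ⊤ := by
    rw [hsdef, Measure.volume_eq_prod, Measure.prod_prod]
    exact ENNReal.mul_lt_top measure_ball_lt_top measure_ball_lt_top
  set V : ℝ := (volume s).toReal with hVdef
  have hV0 : 0 ≤ V := ENNReal.toReal_nonneg
  -- pointwise bound on the integrand of `locOp`
  have hpoint : ∀ (t : Rd d) (p : Rd d × Rd d), p ∈ s →
      ‖STFT d f p.1 p.2 *
          Complex.exp (Complex.ofReal (2 * Real.pi * ⟪p.2, t⟫_ℝ) * Complex.I) *
          gaussd d (t - p.1)‖ ≤ K * M * (K * G t) := by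
    intro t p hp
    rw [hsdef, Set.mem_prod] at hp
    have hx : ‖p.1‖ ≤ R := le_of_lt (mem_ball_zero_iff.mp hp.1)
    rw [norm_mul, norm_mul,
      show Complex.ofReal (2 * Real.pi * ⟪p.2, t⟫_ℝ) * Complex.I
        = ((2 * Real.pi * ⟪p.2, t⟫_ℝ : ℝ) : ℂ) * Complex.I from rfl,
      Complex.norm_exp_ofReal_mul_I, mul_one]
    have h1 := stft_bound hf hR.le hx p.2
    have h2 := gaussd_translate_le hR.le hx (t := t)
    rw [← hc0def, ← hKdef, ← hMdef] at h1
    rw [← hc0def, ← hKdef] at h2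
    exact mul_le_mul h1 h2 (norm_nonneg _) (by positivity)
  -- time-side bound
  have htime : ∀ t : Rd d, ‖locOp d R f t‖ ≤ K * M * (K * G t) * V := by
    intro t
    exact norm_setIntegral_le_of_norm_le_const hsfin (hpoint t)
  -- Fourier-side computation
  have hFbound : ∀ ξ : Rd d,
      ‖FourierTransform.fourier (locOp d R f) ξ‖ ≤ K * M * (K * G ξ) * V := by
    intro ξ
    -- measurable representative
    have hf1 := hf.1
    set f' := hf1.mk f with hf'def
    have hf'sm : StronglyMeasurable f' := hf1.stronglyMeasurable_mk
    have hff' : f =ᵐ[volume] f' := hf1.ae_eq_mk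
    have hSTFTc : ∀ x η : Rd d, STFT d f x η = STFT d f' x η := by
      intro x η
      exact integral_congr_ae (hff'.mono fun t ht => by dsimp only; rw [ht])
    have hSTFTsm := stronglyMeasurable_stft hf'sm
    -- the double-integral form
    have hInt : Integrable (Function.uncurry fun (t : Rd d) (p : Rd d × Rd d) =>
        Complex.exp (Complex.ofReal (-2 * Real.pi * ⟪t, ξ⟫_ℝ) * Complex.I) *
          (STFT d f p.1 p.2 *
            Complex.exp (Complex.ofReal (2 * Real.pi * ⟪p.2, t⟫_ℝ) * Complex.I) *
            gaussd d (t - p.1)))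
        ((volume : Measure (Rd d)).prod ((volume : Measure (Rd d × Rd d)).restrict s)) := by
      haveI : IsFiniteMeasure ((volume : Measure (Rd d × Rd d)).restrict s) :=
        ⟨by rwa [Measure.restrict_apply_univ]⟩
      have hdom : Integrable (fun z : Rd d × (Rd d × Rd d) =>
          (K * M * K * G z.1) * (1:ℝ))
          ((volume : Measure (Rd d)).prod ((volume : Measure (Rd d × Rd d)).restrict s)) := by
        exact Integrable.mul_prod ((integrable_gauss_rd d hpihalf).const_mul (K * M * K))
          (integrable_const 1)
      have hmeas : AEStronglyMeasurable (Function.uncurry fun (t : Rd d) (p : Rd d × Rd d) =>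
          Complex.exp (Complex.ofReal (-2 * Real.pi * ⟪t, ξ⟫_ℝ) * Complex.I) *
            (STFT d f p.1 p.2 *
              Complex.exp (Complex.ofReal (2 * Real.pi * ⟪p.2, t⟫_ℝ) * Complex.I) *
              gaussd d (t - p.1)))
          ((volume : Measure (Rd d)).prod ((volume : Measure (Rd d × Rd d)).restrict s)) := by
        simp only [Function.uncurry, hSTFTc]
        apply AEStronglyMeasurable.mul
        · apply Continuous.aestronglyMeasurable
          refine Complex.continuous_exp.comp (Continuous.mul ?_ continuous_const)
          refine Complex.continuous_ofReal.comp (Continuous.mul continuous_const ?_)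
          exact continuous_fst.inner continuous_const
        apply AEStronglyMeasurable.mul
        apply AEStronglyMeasurable.mul
        · exact (hSTFTsm.comp_measurable measurable_snd).aestronglyMeasurable
        · apply Continuous.aestronglyMeasurable
          refine Complex.continuous_exp.comp (Continuous.mul ?_ continuous_const)
          refine Complex.continuous_ofReal.comp (Continuous.mul continuous_const ?_)
          exact (continuous_snd.snd).inner continuous_fst
        · exact ((continuous_gaussd d).comp
            (continuous_fst.sub continuous_snd.fst)).aestronglyMeasurable
      have hae : ∀ᵐ z : Rd d × (Rd d × Rd d)
          ∂((volume : Measure (Rd d)).prod ((volume : Measure (Rd d × Rd d)).restrict s)),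
          z.2 ∈ s := by
        rw [ae_iff]
        have hset : {z : Rd d × (Rd d × Rd d) | ¬ z.2 ∈ s} = Set.univ ×ˢ sᶜ := by
          ext z; simp
        rw [hset, Measure.prod_prod, Measure.restrict_apply hsm.compl]
        simp
      refine hdom.mono' hmeas ?_
      filter_upwards [hae] with z hz
      have := hpoint z.1 z.2 hz
      rw [Function.uncurry, norm_mul,
        show Complex.ofReal (-2 * Real.pi * ⟪z.1, ξ⟫_ℝ) * Complex.I
          = ((-2 * Real.pi * ⟪z.1, ξ⟫_ℝ : ℝ) : ℂ) * Complex.I from rfl,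
        Complex.norm_exp_ofReal_mul_I, one_mul]
      calc ‖STFT d f z.2.1 z.2.2 *
            Complex.exp (Complex.ofReal (2 * Real.pi * ⟪z.2.2, z.1⟫_ℝ) * Complex.I) *
            gaussd d (z.1 - z.2.1)‖ ≤ K * M * (K * G z.1) := this
        _ = K * M * K * G z.1 * 1 := by ring
    -- rewrite the Fourier integral and swap
    have heq1 : FourierTransform.fourier (locOp d R f) ξ =
        ∫ t : Rd d, ∫ p in s,
          Complex.exp (Complex.ofReal (-2 * Real.pi * ⟪t, ξ⟫_ℝ) * Complex.I) *
            (STFT d f p.1 p.2 *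
              Complex.exp (Complex.ofReal (2 * Real.pi * ⟪p.2, t⟫_ℝ) * Complex.I) *
              gaussd d (t - p.1)) := by
      rw [Real.fourier_eq']
      refine integral_congr_ae (Eventually.of_forall fun t => ?_)
      dsimp only
      rw [smul_eq_mul, locOp, ← integral_const_mul]
    have heq2 : FourierTransform.fourier (locOp d R f) ξ =
        ∫ p in s, STFT d f p.1 p.2 *
          FourierTransform.fourier (fun u : Rd d => gaussd d (u - p.1)) (ξ - p.2) := by
      rw [heq1, integral_integral_swap hInt]
      refine integral_congr_ae (Eventually.of_forall fun p => ?_)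
      dsimp only
      rw [show FourierTransform.fourier (fun u : Rd d => gaussd d (u - p.1)) (ξ - p.2)
          = ∫ t : Rd d, Complex.exp (Complex.ofReal (-2 * Real.pi * ⟪t, ξ - p.2⟫_ℝ)
              * Complex.I) * gaussd d (t - p.1) by
        rw [Real.fourier_eq']
        refine integral_congr_ae (Eventually.of_forall fun t => ?_)
        dsimp only
        rw [smul_eq_mul]]
      rw [← integral_const_mul]
      refine integral_congr_ae (Eventually.of_forall fun t => ?_)
      dsimp only
      rw [show Complex.exp (Complex.ofReal (-2 * Real.pi * ⟪t, ξ⟫_ℝ) * Complex.I) *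
          (STFT d f p.1 p.2 *
            Complex.exp (Complex.ofReal (2 * Real.pi * ⟪p.2, t⟫_ℝ) * Complex.I) *
            gaussd d (t - p.1))
          = STFT d f p.1 p.2 *
            ((Complex.exp (Complex.ofReal (-2 * Real.pi * ⟪t, ξ⟫_ℝ) * Complex.I) *
              Complex.exp (Complex.ofReal (2 * Real.pi * ⟪p.2, t⟫_ℝ) * Complex.I)) *
            gaussd d (t - p.1)) by ring, ← Complex.exp_add]
      congr 2
      rw [show ⟪t, ξ - p.2⟫_ℝ = ⟪t, ξ⟫_ℝ - ⟪p.2, t⟫_ℝ by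
        rw [inner_sub_right, real_inner_comm p.2 t]]
      push_cast
      ring
    rw [heq2]
    refine norm_setIntegral_le_of_norm_le_const hsfin fun p hp => ?_
    rw [hsdef, Set.mem_prod] at hp
    have hx : ‖p.1‖ ≤ R := le_of_lt (mem_ball_zero_iff.mp hp.1)
    have hy : ‖p.2‖ ≤ R := le_of_lt (mem_ball_zero_iff.mp hp.2)
    rw [norm_mul, norm_fourier_gaussd_translate]
    have h1 := stft_bound hf hR.le hx p.2
    rw [← hc0def, ← hKdef, ← hMdef] at h1
    have h2 := gaussd_translate_le (x := p.2) (t := ξ) hR.le hy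
    rw [← hc0def, ← hKdef] at h2
    exact mul_le_mul h1 h2 (norm_nonneg _) (by positivity)
  -- conclude
  refine ⟨K * M * K * V + 1, Real.pi/2, Real.pi/2, by positivity, hpihalf, hpihalf, ?_, ?_⟩
  · intro t
    have := htime t
    have hle : K * M * (K * G t) * V ≤ (K * M * K * V + 1) * G t := by
      have : K * M * (K * G t) * V = (K * M * K * V) * G t := by ring
      rw [this]
      have := (hG0 t).le
      nlinarith [hG0 t]
    calc ‖locOp d R f t‖ ≤ K * M * (K * G t) * V := htime t
      _ ≤ (K * M * K * V + 1) * G t := hle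
      _ = (K * M * K * V + 1) * Real.exp (-(Real.pi/2) * ‖t‖ ^ 2) := rfl
  · intro ξ
    have hle : K * M * (K * G ξ) * V ≤ (K * M * K * V + 1) * G ξ := by
      have h : K * M * (K * G ξ) * V = (K * M * K * V) * G ξ := by ring
      rw [h]
      nlinarith [hG0 ξ]
    calc ‖FourierTransform.fourier (locOp d R f) ξ‖ ≤ K * M * (K * G ξ) * V := hFbound ξ
      _ ≤ (K * M * K * V + 1) * G ξ := hle
      _ = (K * M * K * V + 1) * Real.exp (-(Real.pi/2) * ‖ξ‖ ^ 2) := rfl
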